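/- Let V, V' ⊆ {1,…,N} be nonempty with V ∩ V' = ∅, let a ∈ 𝔸_V, let a', ã' ∈ 𝔸_{V'}, and let c ∈ ℝ^N have strictly positive entries. If N^eff(a',c) ≤ N^eff(ã',c), then N^eff(a+a',c) ≤ N^eff(a+ã',c); moreover, under this hypothesis, N^eff(a+a',c) = N^eff(a+ã',c) implies N^eff(a',c) = N^eff(ã',c). -/

import Mathlib

/-!
Write `r = a *ᵥ c` for the vector of weighted row sums, so that `Neff a c = (∑ r)² / ∑ r²`.
For `a ∈ 𝔸_V` the numerator is `(∑_{j ∈ V} c j)²`, independent of `a`, and `r` vanishes off `V`.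
If the supports `V` and `V'` are disjoint, the rows of `a` and `a'` do not interact:
`Neff (a + a') c = (S + S')² / (Q + Q')`, where `S, S'` are the sums of `c` over `V, V'` and
`Q, Q'` the sums of squares of the weighted row sums of `a, a'`. Since the numerators are fixed,
comparing effective sample sizes amounts to comparing `Q'`, and adding `Q` preserves the comparison.
-/

open Finset

def memA {N : ℕ} (V : Finset (Fin N)) (a : Matrix (Fin N) (Fin N) ℝ) : Prop :=
  (∀ i j, 0 ≤ a i j) ∧
  (∀ i j, (i ∉ V ∨ j ∉ V) → a i j = 0) ∧
  (∀ i ∈ V, ∑ j, a i j = 1) ∧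
  (∀ j ∈ V, ∑ i, a i j = 1)

noncomputable def Neff {N : ℕ} (a : Matrix (Fin N) (Fin N) ℝ) (c : Fin N → ℝ) : ℝ :=
  (∑ i, ∑ j, a i j * c j) ^ 2 / (∑ i, (∑ j, a i j * c j) ^ 2)

open Matrix

theorem neff_eq_mulVec {N : ℕ} (a : Matrix (Fin N) (Fin N) ℝ) (c : Fin N → ℝ) :
    Neff a c = (∑ i, (a *ᵥ c) i) ^ 2 / ∑ i, (a *ᵥ c) i ^ 2 :=
  rfl

theorem sum_sq_pos_of_sum_ne_zero {ι : Type*} [Fintype ι] {u : ι → ℝ} (hu : ∑ i, u i ≠ 0) :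
    0 < ∑ i, u i ^ 2 := by
  refine (sum_nonneg fun i _ => sq_nonneg (u i)).lt_of_ne fun h => hu ?_
  have hsq := (sum_eq_zero_iff_of_nonneg fun i _ => sq_nonneg (u i)).mp h.symm
  exact sum_eq_zero fun i hi => pow_eq_zero_iff two_ne_zero |>.mp (hsq i hi)

theorem sum_add_sq_of_mul_eq_zero {ι : Type*} [Fintype ι] {u v : ι → ℝ}
    (huv : ∀ i, u i * v i = 0) :
    ∑ i, (u i + v i) ^ 2 = ∑ i, u i ^ 2 + ∑ i, v i ^ 2 := by
  rw [← sum_add_distrib]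
  exact sum_congr rfl fun i _ => by rw [add_sq, mul_assoc, huv, mul_zero, add_zero]

namespace memA

variable {N : ℕ} {V : Finset (Fin N)} {a : Matrix (Fin N) (Fin N) ℝ}

theorem mulVec_apply_eq_zero (ha : memA V a) (c : Fin N → ℝ) {i : Fin N} (hi : i ∉ V) :
    (a *ᵥ c) i = 0 :=
  show ∑ j, a i j * c j = 0 from sum_eq_zero fun j _ => by rw [ha.2.1 i j (Or.inl hi), zero_mul]

theorem sum_mulVec (ha : memA V a) (c : Fin N → ℝ) : ∑ i, (a *ᵥ c) i = ∑ j ∈ V, c j := by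
  simp only [mulVec, dotProduct]
  rw [sum_comm, ← sum_subset (subset_univ V) fun j _ hj =>
    sum_eq_zero fun i _ => by rw [ha.2.1 i j (Or.inr hj), zero_mul]]
  exact sum_congr rfl fun j hj => by rw [← sum_mul, ha.2.2.2 j hj, one_mul]

theorem neff_eq (ha : memA V a) (c : Fin N → ℝ) :
    Neff a c = (∑ j ∈ V, c j) ^ 2 / ∑ i, (a *ᵥ c) i ^ 2 := by
  rw [neff_eq_mulVec, ha.sum_mulVec c]

theorem sum_mulVec_sq_pos (ha : memA V a) (hV : V.Nonempty) {c : Fin N → ℝ}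
    (hc : ∀ j, 0 < c j) : 0 < ∑ i, (a *ᵥ c) i ^ 2 :=
  sum_sq_pos_of_sum_ne_zero <| by
    rw [ha.sum_mulVec c]
    exact (sum_pos (fun j _ => hc j) hV).ne'

theorem neff_add {V' : Finset (Fin N)} (hdisj : Disjoint V V') {a' : Matrix (Fin N) (Fin N) ℝ}
    (ha : memA V a) (ha' : memA V' a') (c : Fin N → ℝ) :
    Neff (a + a') c = (∑ j ∈ V, c j + ∑ j ∈ V', c j) ^ 2 /
      (∑ i, (a *ᵥ c) i ^ 2 + ∑ i, (a' *ᵥ c) i ^ 2) := by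
  have hdisjoint_rows : ∀ i, (a *ᵥ c) i * (a' *ᵥ c) i = 0 := fun i => by
    by_cases hi : i ∈ V
    · rw [ha'.mulVec_apply_eq_zero c (disjoint_left.mp hdisj hi), mul_zero]
    · rw [ha.mulVec_apply_eq_zero c hi, zero_mul]
  rw [neff_eq_mulVec, add_mulVec, ← ha.sum_mulVec c, ← ha'.sum_mulVec c, ← sum_add_distrib,
    ← sum_add_sq_of_mul_eq_zero hdisjoint_rows]
  simp only [Pi.add_apply]

end memA

theorem stmt_5_general {N : ℕ} (V V' : Finset (Fin N))
    (hV' : V'.Nonempty) (hdisj : Disjoint V V')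
    (a : Matrix (Fin N) (Fin N) ℝ) (ha : memA V a)
    (a' b' : Matrix (Fin N) (Fin N) ℝ) (ha' : memA V' a') (hb' : memA V' b')
    (c : Fin N → ℝ) (hc : ∀ j, 0 < c j)
    (h : Neff a' c ≤ Neff b' c) :
    Neff (a + a') c ≤ Neff (a + b') c ∧
    (Neff (a + a') c = Neff (a + b') c → Neff a' c = Neff b' c) := by
  have hS : 0 ≤ ∑ j ∈ V, c j := sum_nonneg fun j _ => (hc j).le
  have hS' : 0 < ∑ j ∈ V', c j := sum_pos (fun j _ => hc j) hV'
  have hQ : 0 ≤ ∑ i, (a *ᵥ c) i ^ 2 := sum_nonneg fun i _ => sq_nonneg _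
  have hQa' := ha'.sum_mulVec_sq_pos hV' hc
  have hQb' := hb'.sum_mulVec_sq_pos hV' hc
  rw [ha'.neff_eq, hb'.neff_eq, div_le_div_iff_of_pos_left (by positivity) hQa' hQb'] at h
  rw [ha.neff_add hdisj ha', ha.neff_add hdisj hb', ha'.neff_eq, hb'.neff_eq,
    div_le_div_iff_of_pos_left (by positivity) (by positivity) (by positivity),
    div_eq_div_iff (by positivity) (by positivity), mul_right_inj' (by positivity)]
  exact ⟨by linarith, fun hsum => by rw [add_left_cancel hsum]⟩

/-- Monotonicity of the effective sample size: here `b'` plays the role of `ã'`. -/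
theorem stmt_5 {N : ℕ} (hN : 1 ≤ N) (V V' : Finset (Fin N))
    (hV : V.Nonempty) (hV' : V'.Nonempty) (hdisj : Disjoint V V')
    (a : Matrix (Fin N) (Fin N) ℝ) (ha : memA V a)
    (a' b' : Matrix (Fin N) (Fin N) ℝ) (ha' : memA V' a') (hb' : memA V' b')
    (c : Fin N → ℝ) (hc : ∀ j, 0 < c j)
    (h : Neff a' c ≤ Neff b' c) :
    Neff (a + a') c ≤ Neff (a + b') c ∧
    (Neff (a + a') c = Neff (a + b') c → Neff a' c = Neff b' c) :=
  stmt_5_general V V' hV' hdisj a ha a' b' ha' hb' c hc h
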